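/- Lemma 6.4 (window of a consecutive composition): Let k ≥ 2, r ≥ 2, n = rk, and fix 1 ≤ i ≤ k−1. Define the k-periodic map T_i on configurations by: T_i(v)_j = v_{j+1} if j ≡ ℓ (mod k) for some 1 ≤ ℓ ≤ i; T_i(v)_j = (v_{j−i} v_{j−i+1} ⋯ v_j) ∩ (v_{j+1} v_{j+2} ⋯ v_{j+k−i}) (the degree-one Grassmann–Cayley meet) if j ≡ i+1 (mod k); and T_i(v)_j = v_j if j ≡ ℓ (mod k) for some i+2 ≤ ℓ ≤ k. Then for every index j ∈ ZMod n there exist a sign ε_j ∈ {+1, −1} and a Laurent monomial M_j in the frozen minors (both independent of v) such that for every generic configuration v, the j-th vector of (σ_i ∘ σ_{i−1} ∘ ⋯ ∘ σ_1)(v) equals ε_j · M_j(v) · T_i(v)_j. -/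

import Mathlib

open scoped BigOperators

noncomputable section

/-- Determinant of the `k × k` matrix whose `b`-th column is `c b`. -/
def colDet {k : ℕ} (c : Fin k → Fin k → ℂ) : ℂ :=
  Matrix.det (Matrix.of fun a b => c b a)

/-- The frozen Plücker minor `Δ_m(v)`, on the `k` cyclically consecutive
columns starting at `m`. -/
def frozen (k n : ℕ) (v : ZMod n → Fin k → ℂ) (m : ZMod n) : ℂ :=
  colDet (fun b : Fin k => v (m + ((b : ℕ) : ZMod n)))

/-- A configuration is generic if all frozen minors are nonzero. -/
def Generic (k n : ℕ) (v : ZMod n → Fin k → ℂ) : Prop :=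
  ∀ m : ZMod n, frozen k n v m ≠ 0

/-- The Laurent monomial `∏_m Δ_m(v)^(e m)` in the frozen minors. -/
def laurent (k n : ℕ) (e : Fin n → ℤ) (v : ZMod n → Fin k → ℂ) : ℂ :=
  ∏ m : Fin n, frozen k n v ((m : ℕ) : ZMod n) ^ e m

/-- The Artin generator `σ_i` acting on configurations. -/
def artin (k n i : ℕ) (v : ZMod n → Fin k → ℂ) : ZMod n → Fin k → ℂ :=
  fun j =>
    if (ZMod.val j) % k = i % k then v (j + 1)
    else if (ZMod.val j) % k = (i + 1) % k then
      (colDet (fun b : Fin k =>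
          if (b : ℕ) = 0 then v (j - 1) else v (j + ((b : ℕ) : ZMod n)))) • v j
        - (frozen k n v j) • v (j - 1)
    else v j

/-- `artinComp k n i v = σ_i (σ_{i-1} (⋯ (σ_1 v)))`. -/
def artinComp (k n : ℕ) : ℕ → (ZMod n → Fin k → ℂ) → ZMod n → Fin k → ℂ
  | 0, v => v
  | m + 1, v => artin k n (m + 1) (artinComp k n m v)

/-- `artinCompRev k n i v = σ_1 (σ_2 (⋯ (σ_i v)))`. -/
def artinCompRev (k n : ℕ) : ℕ → (ZMod n → Fin k → ℂ) → ZMod n → Fin k → ℂ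
  | 0, v => v
  | m + 1, v => artinCompRev k n m (artin k n (m + 1) v)

/-- The degree-one Grassmann–Cayley meet
`(a_1 ⋯ a_p) ∩ (b_1 ⋯ b_q)` (intended for `p + q = k + 1`):
`Σ_{i=1}^{p} (−1)^{p−i} · det(a_1 | ⋯ | â_i | ⋯ | a_p | b_1 | ⋯ | b_q) · a_i`. -/
def gcMeet {k p q : ℕ} (a : Fin p → Fin k → ℂ) (b : Fin q → Fin k → ℂ) : Fin k → ℂ :=
  ∑ i : Fin p, ((-1 : ℂ) ^ (p - 1 - (i : ℕ)) *
    colDet (fun c : Fin k =>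
      if hc : (c : ℕ) < p - 1 then
        (if hci : (c : ℕ) < (i : ℕ) then a ⟨(c : ℕ), Nat.lt_trans hci i.isLt⟩
         else a ⟨(c : ℕ) + 1, by have := i.isLt; omega⟩)
      else if hq : (c : ℕ) - (p - 1) < q then b ⟨(c : ℕ) - (p - 1), hq⟩ else 0)) • a i



/-- The k-periodic map `T_i` of Lemma 6.4 given in window notation
`[v_2, …, v_{i+1}, (v_1 ⋯ v_{i+1}) ∩ (v_{i+2} ⋯ v_{k+1}), v_{i+2}, …, v_k]`. -/
def Tmap (k n i : ℕ) (v : ZMod n → Fin k → ℂ) : ZMod n → Fin k → ℂ :=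
  fun j =>
    if 1 ≤ (ZMod.val j) % k ∧ (ZMod.val j) % k ≤ i then v (j + 1)
    else if (ZMod.val j) % k = (i + 1) % k then
      gcMeet (fun m : Fin (i + 1) => v (j - ((i : ℕ) : ZMod n) + ((m : ℕ) : ZMod n)))
             (fun m : Fin (k - i) => v (j + 1 + ((m : ℕ) : ZMod n)))
    else v j

/-!
Induction on `i`. The generator `σ_{i+1}` moves only the vectors of class `i + 2`, and there it is
homogeneous: rescaling every vector rescales the new one by a product of the scalars. So it
suffices to evaluate `σ_{i+1}` on `T_i v` at such an index `j`. With `u_t = v_{j-i-1+t}`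
(`0 ≤ t ≤ k`) one has `T_i(v)_{j-1} = (u_0 ⋯ u_i) ∩ (u_{i+1} ⋯ u_k)` and
`T_{i+1}(v)_j = (u_0 ⋯ u_{i+1}) ∩ (u_{i+2} ⋯ u_k)`, which is
`det(u_0, …, û_{i+1}, …, u_k) u_{i+1} - T_i(v)_{j-1}`.
The window of `T_i v` at `j` ends with the meet `T_i(v)_{j+k-1}`; expanding it, every term but one
repeats an earlier column, which produces the factor `Δ_{j+k-i}`. In the remaining determinant,
whose first column is `T_i(v)_{j-1}`, the Cramer relation
`∑_t (-1)^t det(u_0, …, û_t, …, u_k) u_t = 0` again leaves a single term,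
`det(u_0, …, û_{i+1}, …, u_k) Δ_j`. Hence `σ_{i+1}(T_i v)_j = Δ_{j+k-i} Δ_j T_{i+1}(v)_j`.
-/

open Finset Function

theorem AlternatingMap.map_update_sum_smul_eq_single {R M N ι κ : Type*} [Semiring R]
    [AddCommMonoid M] [Module R M] [AddCommMonoid N] [Module R N] [DecidableEq ι]
    (f : M [⋀^ι]→ₗ[R] N) (W : ι → M) (q : ι) (s : Finset κ) (c : κ → R) (u : κ → M)
    {t₀ : κ} (ht₀ : t₀ ∈ s) (hu : ∀ t ∈ s, t ≠ t₀ → ∃ b ≠ q, W b = u t) :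
    f (update W q (∑ t ∈ s, c t • u t)) = c t₀ • f (update W q (u t₀)) := by
  rw [f.map_update_sum, sum_eq_single_of_mem t₀ ht₀, f.map_update_smul]
  intro t ht htt₀
  obtain ⟨b, hbq, hb⟩ := hu t ht htt₀
  rw [f.map_update_smul, f.map_eq_zero_of_eq _ (by simp [hb, hbq]) hbq.symm, smul_zero]

theorem neg_one_pow_mul_self {R : Type*} [Monoid R] [HasDistribNeg R] (p : ℕ) :
    (-1 : R) ^ p * (-1) ^ p = 1 := by
  rw [← pow_add, ← two_mul, pow_mul, neg_one_sq, one_pow]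

section Meet

variable {k : ℕ}

theorem colDet_eq_detRowAlternating :
    (colDet : (Fin k → Fin k → ℂ) → ℂ) = Matrix.detRowAlternating := by
  funext c
  rw [colDet, ← Matrix.det_transpose]
  rfl

theorem colDet_update_smul (s : Fin k → ℂ) (x : Fin k → Fin k → ℂ) (q : Fin k) (a : ℂ)
    (y : Fin k → ℂ) : colDet (update (fun b => s b • x b) q (a • y)) =
      (a * ∏ b ∈ univ \ {q}, s b) * colDet (update x q y) := by
  have : update (fun b => s b • x b) q (a • y) = fun b => update s q a b • update x q y b := by
    funext b
    rcases eq_or_ne b q with rfl | hb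
    · simp only [update_self]
    · simp only [update_of_ne hb]
  rw [this, colDet_eq_detRowAlternating, AlternatingMap.map_smul_univ, smul_eq_mul,
    prod_update_of_mem (mem_univ q)]

def minor (u : ℕ → Fin k → ℂ) (t : ℕ) : ℂ :=
  colDet fun c : Fin k => if (c : ℕ) < t then u c else u (c + 1)

/-- The Grassmann–Cayley meet `(u 0 ⋯ u p) ∩ (u (p+1) ⋯ u k)`, see `gcMeet_eq_meet`. -/
def meet (p : ℕ) (u : ℕ → Fin k → ℂ) : Fin k → ℂ :=
  (-1 : ℂ) ^ p • ∑ t ∈ range (p + 1), ((-1) ^ t * minor u t) • u t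

theorem meet_eq_sum (p : ℕ) (u : ℕ → Fin k → ℂ) :
    meet p u = ∑ t ∈ range (p + 1), ((-1) ^ p * ((-1) ^ t * minor u t)) • u t := by
  simp only [meet, smul_sum, smul_smul]

theorem minor_zero (u : ℕ → Fin k → ℂ) : minor u 0 = colDet fun c : Fin k => u (c + 1) := by
  simp [minor]

theorem meet_zero (u : ℕ → Fin k → ℂ) : meet 0 u = minor u 0 • u 0 := by
  simp [meet]

theorem meet_succ (p : ℕ) (u : ℕ → Fin k → ℂ) :
    meet (p + 1) u = minor u (p + 1) • u (p + 1) - meet p u := by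
  rw [meet, meet, sum_range_succ, smul_add, smul_smul, ← mul_assoc, neg_one_pow_mul_self, one_mul,
    pow_succ, mul_neg_one, neg_smul]
  abel

theorem minor_eq_colDet_comp_succAbove (u : ℕ → Fin k → ℂ) (t : Fin (k + 1)) :
    minor u t = colDet ((fun s : Fin (k + 1) => u s) ∘ t.succAbove) := by
  rw [minor]
  congr 1
  funext c
  simp only [comp_apply, Fin.succAbove, Fin.lt_def, Fin.val_castSucc]
  split_ifs <;> rfl

theorem sum_neg_one_pow_mul_minor_smul_eq_zero (u : ℕ → Fin k → ℂ) :
    ∑ t ∈ range (k + 1), ((-1) ^ t * minor u t) • u t = 0 := by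
  funext s
  -- Laplace expansion along the first row of a matrix whose first row repeats row `s + 1`
  let N : Matrix (Fin (k + 1)) (Fin (k + 1)) ℂ :=
    Matrix.of fun a t => Fin.cases (u t s) (fun a' => u t a') a
  have hN : N.det = 0 :=
    Matrix.det_zero_of_row_eq (i := 0) (j := s.succ) (Fin.succ_ne_zero s).symm rfl
  rw [Matrix.det_succ_row_zero] at hN
  rw [← Fin.sum_univ_eq_sum_range (fun t => ((-1) ^ t * minor u t) • u t), Pi.zero_apply, ← hN]
  simp only [Finset.sum_apply, Pi.smul_apply, smul_eq_mul]
  refine sum_congr rfl fun t _ => ?_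
  rw [minor_eq_colDet_comp_succAbove, colDet, mul_right_comm]
  rfl

theorem colDet_update_meet [NeZero k] {p : ℕ} (hp : p < k) (u : ℕ → Fin k → ℂ) :
    colDet (update (fun b : Fin k => u (p + 1 + b)) 0 (meet p u)) =
      minor u (p + 1) * colDet fun b : Fin k => u (p + 1 + b) := by
  have hsplit := sum_range_add_sum_Ico (fun t => ((-1) ^ t * minor u t) • u t)
    (show p + 1 ≤ k + 1 by omega)
  rw [sum_neg_one_pow_mul_minor_smul_eq_zero, add_eq_zero_iff_eq_neg] at hsplit
  -- by the Cramer relation only `u (p + 1)` contributes: every later `u t` is already a column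
  have hmeet :
      meet p u = ∑ t ∈ Ico (p + 1) (k + 1), (-(-1) ^ p * ((-1) ^ t * minor u t)) • u t := by
    simp only [meet, hsplit, smul_neg, smul_sum, smul_smul, neg_mul, neg_smul, sum_neg_distrib]
  rw [hmeet, colDet_eq_detRowAlternating,
    AlternatingMap.map_update_sum_smul_eq_single _ _ _ _ _ _ (t₀ := p + 1) (by simp; omega)]
  · rw [update_eq_self_iff.mpr (by simp), smul_eq_mul, pow_succ]
    linear_combination (minor u (p + 1) * Matrix.detRowAlternating fun b : Fin k => u (p + 1 + b)) *
      neg_one_pow_mul_self (R := ℂ) p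
  · intro t ht htp
    simp only [mem_Ico] at ht
    exact ⟨⟨t - (p + 1), by omega⟩, by simp [Fin.ext_iff]; omega, by simp; congr 1; omega⟩

theorem colDet_rotate {a : ℕ} (ha : a < k) (y : ℕ → Fin k → ℂ) :
    colDet (fun b : Fin k => if (b : ℕ) < a then y b else if (b : ℕ) < k - 1 then y (b + 1)
        else y a) = (-1) ^ (k - 1 - a) * colDet fun b : Fin k => y b := by
  have : NeZero k := ⟨by omega⟩
  obtain ⟨a', ha'⟩ : ∃ a' : Fin k, (a' : ℕ) = a := ⟨⟨a, ha⟩, rfl⟩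
  obtain ⟨last, hlast⟩ : ∃ last : Fin k, (last : ℕ) = k - 1 := ⟨⟨k - 1, by omega⟩, rfl⟩
  have hal : a' ≤ last := by rw [Fin.le_def]; omega
  have hcycle : (fun b : Fin k => if (b : ℕ) < a then y b else if (b : ℕ) < k - 1 then y (b + 1)
      else y a) = (fun b : Fin k => y b) ∘ Fin.cycleIcc a' last := by
    funext b
    have hb := b.isLt
    rw [comp_apply]
    split_ifs with h1 h2
    · rw [Fin.cycleIcc_of_lt (by rw [Fin.lt_def]; omega)]
    · rw [Fin.cycleIcc_of_ge_of_lt (by rw [Fin.le_def]; omega) (by rw [Fin.lt_def]; omega),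
        Fin.val_add_one_of_lt' (by omega)]
    · rw [show b = last by rw [Fin.ext_iff]; omega, Fin.cycleIcc_of_last hal, ha']
  rw [hcycle, colDet_eq_detRowAlternating, AlternatingMap.map_perm, Fin.sign_cycleIcc_of_le hal,
    hlast, ha', Units.smul_def, Units.val_pow_eq_pow_val, Units.val_neg, Units.val_one]
  simp

theorem colDet_rotate_meet {p : ℕ} (hp : p < k) (y : ℕ → Fin k → ℂ) :
    colDet (fun b : Fin k => if (b : ℕ) < k - 1 - p then y b
        else if (b : ℕ) < k - 1 then y (b + 1) else meet p fun t => y (k - 1 - p + t)) =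
      colDet (fun c : Fin k => y (k - p + c)) * colDet fun b : Fin k => y b := by
  set u : ℕ → Fin k → ℂ := fun t => y (k - 1 - p + t)
  obtain ⟨last, hlast⟩ : ∃ last : Fin k, (last : ℕ) = k - 1 := ⟨⟨k - 1, by omega⟩, rfl⟩
  set W : Fin k → Fin k → ℂ := fun b => if (b : ℕ) < k - 1 - p then y b
    else if (b : ℕ) < k - 1 then y (b + 1) else y (k - 1 - p)
  have hcols : (fun b : Fin k => if (b : ℕ) < k - 1 - p then y b
      else if (b : ℕ) < k - 1 then y (b + 1) else meet p u) = update W last (meet p u) := by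
    funext b
    rcases eq_or_ne b last with rfl | hb
    · simp [hlast]
    · have hb' : (b : ℕ) < k - 1 := by rw [Ne, Fin.ext_iff] at hb; omega
      simp [W, update_of_ne hb, hb']
  -- only the `u 0` term of the meet survives: the other `u t` are already columns of `W`
  rw [hcols, meet_eq_sum, colDet_eq_detRowAlternating,
    AlternatingMap.map_update_sum_smul_eq_single _ _ _ _ _ _ (t₀ := 0) (by simp)]
  · rw [update_eq_self_iff.mpr (by simp [W, u, hlast]), ← colDet_eq_detRowAlternating,
      colDet_rotate (by omega), minor_zero, show k - 1 - (k - 1 - p) = p by omega, smul_eq_mul]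
    have hu0 : (colDet fun c : Fin k => u (c + 1)) = colDet fun c : Fin k => y (k - p + c) := by
      congr 1; funext c; exact congrArg y (by omega)
    rw [hu0]
    linear_combination ((colDet fun c : Fin k => y (k - p + c)) * colDet fun b : Fin k => y b) *
      neg_one_pow_mul_self (R := ℂ) p
  · intro t ht ht0
    simp only [mem_range] at ht
    obtain ⟨b, hb⟩ : ∃ b : Fin k, (b : ℕ) = k - 1 - p + t - 1 :=
      ⟨⟨k - 1 - p + t - 1, by omega⟩, rfl⟩
    refine ⟨b, by rw [Ne, Fin.ext_iff]; omega, ?_⟩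
    simp only [W, u, hb, if_neg (show ¬(k - 1 - p + t - 1 < k - 1 - p) by omega),
      if_pos (show k - 1 - p + t - 1 < k - 1 by omega)]
    congr 1
    omega

theorem gcMeet_eq_meet {p : ℕ} (hp : p < k) (u : ℕ → Fin k → ℂ) :
    gcMeet (fun m : Fin (p + 1) => u m) (fun m : Fin (k - p) => u (p + 1 + m)) = meet p u := by
  rw [gcMeet, meet_eq_sum, ← Fin.sum_univ_eq_sum_range]
  refine sum_congr rfl fun t _ => ?_
  have ht := t.isLt
  have hsign : (-1 : ℂ) ^ (p + 1 - 1 - t) = (-1) ^ p * (-1) ^ (t : ℕ) := by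
    rw [show p + 1 - 1 - t = p - t by omega, pow_sub₀ _ (by norm_num) (by omega), ← inv_pow,
      inv_neg_one]
  rw [hsign, mul_assoc, minor]
  congr 4
  funext c
  have hc := c.isLt
  split_ifs <;> first | rfl | omega | exact congrArg u (by dsimp only; omega)

end Meet

section Slot

variable {k n : ℕ}

/-- The representative in `1, …, k` of `j` modulo `k` (the paper's `ℓ` in `j ≡ ℓ (mod k)`). -/
def slot (k : ℕ) (j : ZMod n) : ℕ := (j.val + (k - 1)) % k + 1

theorem one_le_slot (j : ZMod n) : 1 ≤ slot k j := by simp [slot]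

theorem slot_le (hk : 0 < k) (j : ZMod n) : slot k j ≤ k := by
  have := Nat.mod_lt (j.val + (k - 1)) hk
  rw [slot]; omega

theorem slot_mod (hk : 0 < k) (j : ZMod n) : slot k j % k = j.val % k := by
  rw [slot, Nat.add_mod, Nat.mod_mod, ← Nat.add_mod, add_assoc, Nat.sub_add_cancel hk,
    Nat.add_mod_right]

theorem val_mod_eq_mod_iff_slot_eq (hk : 0 < k) (j : ZMod n) {c : ℕ} (hc : 1 ≤ c) (hck : c ≤ k) :
    j.val % k = c % k ↔ slot k j = c := by
  rw [← slot_mod hk]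
  have h1 := one_le_slot (k := k) j
  have h2 := slot_le hk j
  constructor
  · intro h
    rcases h2.lt_or_eq with h2 | h2 <;> rcases hck.lt_or_eq with h3 | h3
    · rwa [Nat.mod_eq_of_lt h2, Nat.mod_eq_of_lt h3] at h
    · rw [Nat.mod_eq_of_lt h2, h3, Nat.mod_self] at h; omega
    · rw [Nat.mod_eq_of_lt h3, h2, Nat.mod_self] at h; omega
    · omega
  · rintro rfl; rfl

theorem one_le_val_mod_and_le_iff_slot_le {i : ℕ} (hik : i < k) (j : ZMod n) :
    (1 ≤ j.val % k ∧ j.val % k ≤ i) ↔ slot k j ≤ i := by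
  have hk : 0 < k := by omega
  rw [← slot_mod hk]
  have h1 := one_le_slot (k := k) j
  rcases (slot_le hk j).lt_or_eq with h2 | h2
  · rw [Nat.mod_eq_of_lt h2]; omega
  · rw [h2, Nat.mod_self]; omega

theorem slot_add_natCast [NeZero n] (hkn : k ∣ n) (j : ZMod n) (b : ℕ) :
    slot k (j + (b : ZMod n)) = (slot k j - 1 + b) % k + 1 := by
  have hv : (j + (b : ZMod n)).val ≡ j.val + b [MOD k] := by
    rw [ZMod.val_add, ZMod.val_natCast]
    exact ((Nat.mod_modEq _ _).of_dvd hkn).trans (((Nat.mod_modEq _ _).of_dvd hkn).add_left _)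
  rw [slot, slot, Nat.add_sub_cancel]
  congr 1
  calc (j + (b : ZMod n)).val + (k - 1) ≡ j.val + b + (k - 1) [MOD k] := hv.add_right _
    _ = j.val + (k - 1) + b := by ring
    _ ≡ (j.val + (k - 1)) % k + b [MOD k] := (Nat.mod_modEq _ _).symm.add_right _

theorem slot_add_of_le [NeZero n] (hkn : k ∣ n) {j : ZMod n} {b : ℕ} (h : slot k j + b ≤ k) :
    slot k (j + (b : ZMod n)) = slot k j + b := by
  have h1 := one_le_slot (k := k) j
  rw [slot_add_natCast hkn, Nat.mod_eq_of_lt (by omega)]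
  omega

theorem slot_add_of_lt [NeZero n] (hkn : k ∣ n) {j : ZMod n} {b : ℕ} (h : k < slot k j + b)
    (h' : slot k j + b ≤ 2 * k) : slot k (j + (b : ZMod n)) = slot k j + b - k := by
  have h1 := one_le_slot (k := k) j
  rw [slot_add_natCast hkn, Nat.mod_eq_sub_mod (by omega), Nat.mod_eq_of_lt (by omega)]
  omega

theorem slot_sub_one [NeZero n] (hkn : k ∣ n) {j : ZMod n} (h : 2 ≤ slot k j) :
    slot k (j - 1) = slot k j - 1 := by
  have hk : 0 < k := Nat.pos_of_dvd_of_pos hkn (NeZero.pos n)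
  have h1 := one_le_slot (k := k) (j - 1)
  have h2 := slot_le hk (j - 1)
  have hj := slot_add_natCast hkn (j - 1) 1
  rw [Nat.cast_one, sub_add_cancel] at hj
  rcases h2.lt_or_eq with h2 | h2
  · rw [Nat.mod_eq_of_lt (by omega)] at hj; omega
  · rw [h2, Nat.sub_add_cancel hk, Nat.mod_self] at hj; omega

end Slot

section Window

variable {k n : ℕ}

def window (k : ℕ) {α : Type*} (v : ZMod n → α) (j : ZMod n) : Fin k → α :=
  fun b => v (j + ((b : ℕ) : ZMod n))

theorem frozen_eq_colDet_window (v : ZMod n → Fin k → ℂ) (j : ZMod n) :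
    frozen k n v j = colDet (window k v j) := rfl

theorem Tmap_of_slot_le {i : ℕ} (hik : i < k) (v : ZMod n → Fin k → ℂ) {j : ZMod n}
    (h : slot k j ≤ i) : Tmap k n i v j = v (j + 1) := by
  rw [Tmap, if_pos ((one_le_val_mod_and_le_iff_slot_le hik j).mpr h)]

theorem Tmap_of_slot_eq {i : ℕ} (hik : i < k) (v : ZMod n → Fin k → ℂ) {j : ZMod n}
    (h : slot k j = i + 1) :
    Tmap k n i v j = meet i fun t => v (j - (i : ZMod n) + (t : ZMod n)) := by
  rw [Tmap, if_neg (by rw [one_le_val_mod_and_le_iff_slot_le hik]; omega),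
    if_pos ((val_mod_eq_mod_iff_slot_eq (by omega) j (by omega) (by omega)).mpr h),
    ← gcMeet_eq_meet hik]
  congr
  funext m
  congr 1
  push_cast
  ring

theorem Tmap_of_lt_slot {i : ℕ} (hik : i < k) (v : ZMod n → Fin k → ℂ) {j : ZMod n}
    (h : i + 1 < slot k j) : Tmap k n i v j = v j := by
  rw [Tmap, if_neg (by rw [one_le_val_mod_and_le_iff_slot_le hik]; omega),
    if_neg (by rw [val_mod_eq_mod_iff_slot_eq (by omega) j (by omega) (by omega)]; omega)]

theorem artin_of_slot_eq {i : ℕ} (hi : 1 ≤ i) (hik : i < k) (v : ZMod n → Fin k → ℂ)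
    {j : ZMod n} (h : slot k j = i) : artin k n i v j = v (j + 1) := by
  rw [artin, if_pos ((val_mod_eq_mod_iff_slot_eq (by omega) j hi hik.le).mpr h)]

theorem artin_of_slot_ne {i : ℕ} (hi : 1 ≤ i) (hik : i < k) (v : ZMod n → Fin k → ℂ)
    {j : ZMod n} (h : slot k j ≠ i) (h' : slot k j ≠ i + 1) : artin k n i v j = v j := by
  rw [artin, if_neg (by rwa [val_mod_eq_mod_iff_slot_eq (by omega) j hi hik.le]),
    if_neg (by rwa [val_mod_eq_mod_iff_slot_eq (by omega) j (by omega) hik])]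

theorem artin_of_slot_eq_succ [NeZero k] {i : ℕ} (hi : 1 ≤ i) (hik : i < k)
    (v : ZMod n → Fin k → ℂ) {j : ZMod n} (h : slot k j = i + 1) :
    artin k n i v j = colDet (update (window k v j) 0 (v (j - 1))) • v j -
      colDet (update (window k v j) 0 (v j)) • v (j - 1) := by
  have hupd : (fun b : Fin k => if (b : ℕ) = 0 then v (j - 1) else v (j + ((b : ℕ) : ZMod n))) =
      update (window k v j) 0 (v (j - 1)) := by
    funext b
    rcases eq_or_ne b 0 with rfl | hb
    · rw [update_self, if_pos (Fin.val_zero k)]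
    · rw [update_of_ne hb, if_neg (Fin.val_ne_zero_iff.mpr hb), window]
  have hF : update (window k v j) 0 (v j) = window k v j :=
    update_eq_self_iff.mpr (by simp [window])
  rw [artin, if_neg (by rw [val_mod_eq_mod_iff_slot_eq (by omega) j hi hik.le]; omega),
    if_pos ((val_mod_eq_mod_iff_slot_eq (by omega) j (by omega) hik).mpr h),
    frozen_eq_colDet_window, hupd, hF]

theorem artin_smul_of_slot_eq_succ [NeZero k] {i : ℕ} (hi : 1 ≤ i) (hik : i < k) {j : ZMod n}
    (h : slot k j = i + 1) (s : ZMod n → ℂ) (x : ZMod n → Fin k → ℂ) :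
    artin k n i (fun t => s t • x t) j =
      (s (j - 1) * s j * ∏ b ∈ univ \ {0}, window k s j b) • artin k n i x j := by
  rw [artin_of_slot_eq_succ hi hik _ h, artin_of_slot_eq_succ hi hik _ h,
    show window k (fun t => s t • x t) j = fun b => window k s j b • window k x j b from rfl,
    colDet_update_smul, colDet_update_smul, smul_sub, smul_smul, smul_smul, smul_smul, smul_smul]
  congr 2 <;> ring

theorem colDet_update_Tmap_window [NeZero n] [NeZero k] (hkn : k ∣ n) {l : ℕ} (hl : l + 2 ≤ k)
    (v : ZMod n → Fin k → ℂ) {j : ZMod n} (hj : slot k j = l + 2) (x : Fin k → ℂ) :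
    colDet (update (window k (Tmap k n l v) j) 0 x) =
      frozen k n v (j + ((k - l : ℕ) : ZMod n)) * colDet (update (window k v j) 0 x) := by
  set y : ℕ → Fin k → ℂ := fun t => if t = 0 then x else v (j + (t : ZMod n))
  have hcols : update (window k (Tmap k n l v) j) 0 x =
      fun b : Fin k => if (b : ℕ) < k - 1 - l then y b else if (b : ℕ) < k - 1 then y (b + 1)
        else meet l fun t => y (k - 1 - l + t) := by
    funext b
    rcases eq_or_ne b 0 with rfl | hb
    · rw [update_self, if_pos (by rw [Fin.val_zero]; omega), Fin.val_zero]; rfl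
    have hb0 : (b : ℕ) ≠ 0 := Fin.val_ne_zero_iff.mpr hb
    have hbk := b.isLt
    rw [update_of_ne hb, window]
    split_ifs with h1 h2
    · rw [Tmap_of_lt_slot (by omega) v (by rw [slot_add_of_le hkn (by omega)]; omega)]
      simp [y, hb0]
    · rw [Tmap_of_slot_le (by omega) v (by rw [slot_add_of_lt hkn (by omega) (by omega)]; omega)]
      simp only [y, if_neg (Nat.succ_ne_zero _)]
      push_cast
      ring_nf
    · rw [Tmap_of_slot_eq (by omega) v (by rw [slot_add_of_lt hkn (by omega) (by omega)]; omega)]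
      congr 1
      funext t
      simp only [y, if_neg (show k - 1 - l + t ≠ 0 by omega)]
      congr 1
      rw [show (b : ℕ) = k - 1 by omega, Nat.cast_add, Nat.cast_sub (by omega : l ≤ k - 1)]
      ring
  have hy : (fun b : Fin k => y b) = update (window k v j) 0 x := by
    funext b
    rcases eq_or_ne b 0 with rfl | hb
    · simp [y]
    · simp [y, window, update_of_ne hb, Fin.val_ne_zero_iff.mpr hb]
  rw [hcols, colDet_rotate_meet (by omega), hy, frozen]
  congr 2
  funext c
  simp only [y, if_neg (show k - l + (c : ℕ) ≠ 0 by omega)]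
  push_cast
  ring_nf

theorem artin_Tmap_of_slot_eq [NeZero n] [NeZero k] (hkn : k ∣ n) {l : ℕ} (hl : l + 2 ≤ k)
    (v : ZMod n → Fin k → ℂ) {j : ZMod n} (hj : slot k j = l + 2) :
    artin k n (l + 1) (Tmap k n l v) j =
      (frozen k n v (j + ((k - l : ℕ) : ZMod n)) * frozen k n v j) • Tmap k n (l + 1) v j := by
  -- the three meets involved are all taken on the same `k + 1` vectors `U 0, …, U k`
  set U : ℕ → Fin k → ℂ := fun t => v (j - ((l + 1 : ℕ) : ZMod n) + (t : ZMod n))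
  have hprev : Tmap k n l v (j - 1) = meet l U := by
    rw [Tmap_of_slot_eq (by omega) v (by rw [slot_sub_one hkn (by omega)]; omega)]
    congr 1
    funext t
    simp only [U]
    push_cast
    ring_nf
  have hself : Tmap k n l v j = U (l + 1) := by
    rw [Tmap_of_lt_slot (by omega) v (by omega)]
    simp [U]
  have hV : (fun b : Fin k => U (l + 1 + b)) = window k v j := by
    funext b
    simp only [U, window]
    push_cast
    ring_nf
  have hnew : Tmap k n (l + 1) v j = meet (l + 1) U := Tmap_of_slot_eq (by omega) v hj
  rw [artin_of_slot_eq_succ (by omega) (by omega) _ hj, colDet_update_Tmap_window hkn hl v hj,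
    colDet_update_Tmap_window hkn hl v hj, hprev, hself, ← hV, colDet_update_meet (by omega),
    update_eq_self_iff.mpr (by simp), hnew, meet_succ, frozen_eq_colDet_window v j, ← hV]
  simp only [smul_sub, smul_smul]
  congr 2
  ring

end Window

section SignedLaurent

variable {k n : ℕ}

def IsSignedLaurent (k n : ℕ) (c : (ZMod n → Fin k → ℂ) → ℂ) : Prop :=
  ∃ (ε : ℂ) (e : Fin n → ℤ), (ε = 1 ∨ ε = -1) ∧ ∀ v, Generic k n v → c v = ε * laurent k n e v

theorem laurent_add {e e' : Fin n → ℤ} {v : ZMod n → Fin k → ℂ} (hv : Generic k n v) :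
    laurent k n (e + e') v = laurent k n e v * laurent k n e' v := by
  simp only [laurent, Pi.add_apply, zpow_add₀ (hv _), prod_mul_distrib]

theorem isSignedLaurent_one : IsSignedLaurent k n fun _ => 1 :=
  ⟨1, 0, Or.inl rfl, fun v _ => by simp [laurent]⟩

theorem IsSignedLaurent.mul {c d : (ZMod n → Fin k → ℂ) → ℂ} (hc : IsSignedLaurent k n c)
    (hd : IsSignedLaurent k n d) : IsSignedLaurent k n fun v => c v * d v := by
  obtain ⟨ε, e, hε, hce⟩ := hc
  obtain ⟨ε', e', hε', hde⟩ := hd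
  refine ⟨ε * ε', e + e', ?_, fun v hv => ?_⟩
  · rcases hε with rfl | rfl <;> rcases hε' with rfl | rfl <;> norm_num
  · show c v * d v = _
    rw [hce v hv, hde v hv, laurent_add hv]
    ring

theorem IsSignedLaurent.prod {ι : Type*} (s : Finset ι) {c : ι → (ZMod n → Fin k → ℂ) → ℂ}
    (hc : ∀ b ∈ s, IsSignedLaurent k n (c b)) : IsSignedLaurent k n fun v => ∏ b ∈ s, c b v := by
  classical
  induction s using Finset.induction_on with
  | empty => simpa using isSignedLaurent_one
  | insert a s ha ih =>
    simp only [prod_insert ha]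
    exact (hc a (mem_insert_self a s)).mul (ih fun b hb => hc b (mem_insert_of_mem hb))

theorem isSignedLaurent_frozen_zpow [NeZero n] (t : ZMod n) (z : ℤ) :
    IsSignedLaurent k n fun v => frozen k n v t ^ z := by
  refine ⟨1, Pi.single ⟨t.val, t.val_lt⟩ z, Or.inl rfl, fun v _ => ?_⟩
  rw [one_mul, laurent, Fintype.prod_eq_single ⟨t.val, t.val_lt⟩ fun m hm => by
    rw [Pi.single_eq_of_ne hm, zpow_zero]]
  simp

theorem isSignedLaurent_frozen [NeZero n] (t : ZMod n) :
    IsSignedLaurent k n fun v => frozen k n v t := by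
  simpa using isSignedLaurent_frozen_zpow (k := k) t 1

end SignedLaurent

theorem exists_eq_smul_Tmap_zero {k n : ℕ} [NeZero n] (hk : 0 < k) (j : ZMod n) :
    ∃ c, IsSignedLaurent k n c ∧ ∀ v, Generic k n v → v j = c v • Tmap k n 0 v j := by
  rcases (one_le_slot (k := k) j).eq_or_lt with h | h
  · refine ⟨fun v => frozen k n v (j + 1) ^ (-1 : ℤ), isSignedLaurent_frozen_zpow _ _,
      fun v hv => ?_⟩
    have hmeet : Tmap k n 0 v j = frozen k n v (j + 1) • v j := by
      rw [Tmap_of_slot_eq hk v h.symm, meet_zero, minor_zero, frozen]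
      simp only [Nat.cast_zero, sub_zero, add_zero]
      congr 2
      funext b
      push_cast
      ring_nf
    rw [hmeet, smul_smul]
    beta_reduce
    rw [zpow_neg_one, inv_mul_cancel₀ (hv _), one_smul]
  · exact ⟨fun _ => 1, isSignedLaurent_one, fun v _ => by rw [Tmap_of_lt_slot hk v h, one_smul]⟩

theorem exists_artin_smul_Tmap_eq {k n : ℕ} [NeZero n] [NeZero k] (hkn : k ∣ n) {l : ℕ}
    (hl : l + 2 ≤ k) {c : ZMod n → (ZMod n → Fin k → ℂ) → ℂ} (hc : ∀ t, IsSignedLaurent k n (c t))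
    (j : ZMod n) : ∃ d, IsSignedLaurent k n d ∧
      ∀ v, artin k n (l + 1) (fun t => c t v • Tmap k n l v t) j = d v • Tmap k n (l + 1) v j := by
  by_cases h1 : slot k j = l + 1
  · refine ⟨c (j + 1), hc _, fun v => ?_⟩
    have hj1 : slot k (j + 1) = l + 2 := by
      simpa [h1] using slot_add_of_le hkn (j := j) (b := 1) (by omega)
    rw [artin_of_slot_eq (by omega) (by omega) _ h1, Tmap_of_lt_slot (by omega) v (by omega),
      Tmap_of_slot_le (by omega) v h1.le]
  by_cases h2 : slot k j = l + 2
  · refine ⟨fun v => (c (j - 1) v * c j v * ∏ b ∈ univ \ {0}, window k (fun t => c t v) j b) *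
        (frozen k n v (j + ((k - l : ℕ) : ZMod n)) * frozen k n v j),
      (((hc _).mul (hc _)).mul (IsSignedLaurent.prod _ fun b _ => hc _)).mul
        ((isSignedLaurent_frozen _).mul (isSignedLaurent_frozen _)), fun v => ?_⟩
    rw [artin_smul_of_slot_eq_succ (by omega) (by omega) h2, artin_Tmap_of_slot_eq hkn hl v h2,
      smul_smul]
  · refine ⟨c j, hc j, fun v => ?_⟩
    rw [artin_of_slot_ne (by omega) (by omega) _ h1 h2]
    rcases le_or_gt (slot k j) l with h | h
    · rw [Tmap_of_slot_le (by omega) v h, Tmap_of_slot_le (by omega) v (by omega)]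
    · rw [Tmap_of_lt_slot (by omega) v (by omega), Tmap_of_lt_slot (by omega) v (by omega)]

theorem exists_artinComp_eq_smul_Tmap {k n : ℕ} [NeZero n] (hkn : k ∣ n) {i : ℕ} (hi : i < k)
    (j : ZMod n) : ∃ c, IsSignedLaurent k n c ∧
      ∀ v, Generic k n v → artinComp k n i v j = c v • Tmap k n i v j := by
  have : NeZero k := ⟨by omega⟩
  induction i generalizing j with
  | zero => exact exists_eq_smul_Tmap_zero hi j
  | succ l ih =>
    choose c hc hcv using ih (by omega)
    obtain ⟨d, hd, hdv⟩ := exists_artin_smul_Tmap_eq hkn (l := l) (by omega) hc j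
    refine ⟨d, hd, fun v hv => ?_⟩
    rw [artinComp, show artinComp k n l v = fun t => c t v • Tmap k n l v t from
      funext fun t => hcv t v hv, hdv]

theorem consecutive_composition_window_general
    (k r n : ℕ) (hk : 2 ≤ k) (hr : 2 ≤ r) (hn : n = r * k)
    (i : ℕ) (hi2 : i ≤ k - 1) (j : ZMod n) :
    ∃ (ε : ℂ) (e : Fin n → ℤ), (ε = 1 ∨ ε = -1) ∧
      ∀ v : ZMod n → Fin k → ℂ, Generic k n v →
        artinComp k n i v j = (ε * laurent k n e v) • Tmap k n i v j := by
  have : NeZero n := ⟨by rw [hn]; positivity⟩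
  obtain ⟨c, ⟨ε, e, hε, hce⟩, hc⟩ := exists_artinComp_eq_smul_Tmap (hn ▸ dvd_mul_left k r)
    (show i < k by omega) j
  exact ⟨ε, e, hε, fun v hv => by rw [hc v hv, hce v hv]⟩

/-- Lemma 6.4 (window of a consecutive composition): the composition
`σ_i ∘ σ_{i−1} ∘ ⋯ ∘ σ_1` agrees componentwise with `T_i`, up to signs and
Laurent monomials in the frozen minors. -/
theorem consecutive_composition_window
    (k r n : ℕ) (hk : 2 ≤ k) (hr : 2 ≤ r) (hn : n = r * k)
    (i : ℕ) (hi1 : 1 ≤ i) (hi2 : i ≤ k - 1) (j : ZMod n) :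
    ∃ (ε : ℂ) (e : Fin n → ℤ), (ε = 1 ∨ ε = -1) ∧
      ∀ v : ZMod n → Fin k → ℂ, Generic k n v →
        artinComp k n i v j = (ε * laurent k n e v) • Tmap k n i v j :=
  consecutive_composition_window_general k r n hk hr hn i hi2 j

end
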